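/- arXiv:1609.09335 — 3 statements merged into one kernel-verified Lean document; each statement's English description precedes it below -/
import Mathlib

section
/- Fix α ∈ (0,1), a > 0 and the skew Brownian density p(t,x,y) as defined case-by-case via Gaussian kernels g_{at}. There exist constants C, c > 1 (depending only on α and a) such that for all t > 0 and all x, y ∈ ℝ: C^{-1} g_{t/c}(y-x) ≤ p(t,x,y) ≤ C g_{ct}(y-x). -/
/-- The centered Gaussian density with variance `C`. -/
noncomputable def gK (C z : ℝ) : ℝ :=
  (2 * Real.pi * C) ^ (-(1:ℝ)/2) * Real.exp (-(z^2) / (2 * C))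

/-- Transition density of the skew Brownian motion with skewness `α` and
diffusion coefficient `a`. -/
noncomputable def skewP (α a t x y : ℝ) : ℝ :=
  if 0 ≤ x then
    (if 0 ≤ y then gK (a*t) (y - x) + (2*α - 1) * gK (a*t) (y + x)
     else 2*(1 - α) * gK (a*t) (y - x))
  else
    (if y < 0 then gK (a*t) (y - x) + (1 - 2*α) * gK (a*t) (y + x)
     else 2*α * gK (a*t) (y - x))

lemma gK_def' {C : ℝ} (hC : 0 < C) (z : ℝ) :
    gK C z = (Real.sqrt (2*Real.pi*C))⁻¹ * Real.exp (-(z^2) / (2*C)) := by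
  unfold gK
  rw [show (-(1:ℝ)/2) = -(1/2) by ring, Real.rpow_neg (by positivity), ← Real.sqrt_eq_rpow]

lemma gK_pos {C : ℝ} (hC : 0 < C) (z : ℝ) : 0 < gK C z := by
  rw [gK_def' hC]
  positivity

lemma gK_le_gK {C1 C2 : ℝ} (h1 : 0 < C1) (h : C1 ≤ C2) (z : ℝ) :
    gK C1 z ≤ Real.sqrt (C2 / C1) * gK C2 z := by
  have h2 : 0 < C2 := lt_of_lt_of_le h1 h
  rw [gK_def' h1, gK_def' h2]
  have e1 : (Real.sqrt (2*Real.pi*C1))⁻¹ = Real.sqrt (C2/C1) * (Real.sqrt (2*Real.pi*C2))⁻¹ := by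
    rw [← Real.sqrt_inv, ← Real.sqrt_inv, ← Real.sqrt_mul (by positivity)]
    congr 1
    field_simp
  rw [e1, mul_assoc]
  have hexp : Real.exp (-(z^2)/(2*C1)) ≤ Real.exp (-(z^2)/(2*C2)) := by
    apply Real.exp_le_exp.2
    rw [neg_div, neg_div, neg_le_neg_iff]
    exact div_le_div_of_nonneg_left (by positivity) (by positivity) (by linarith)
  have := mul_le_mul_of_nonneg_left hexp (inv_nonneg.2 (Real.sqrt_nonneg (2*Real.pi*C2)))
  nlinarith [Real.sqrt_nonneg (C2/C1)]

lemma gK_arg_le {C x y : ℝ} (hC : 0 < C) (hxy : 0 ≤ x * y) :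
    gK C (y + x) ≤ gK C (y - x) := by
  rw [gK_def' hC, gK_def' hC]
  apply mul_le_mul_of_nonneg_left _ (by positivity)
  apply Real.exp_le_exp.2
  rw [neg_div, neg_div, neg_le_neg_iff]
  exact div_le_div_of_nonneg_right (by nlinarith) (by positivity)

lemma skew_sandwich {α a : ℝ} (hα : α ∈ Set.Ioo (0:ℝ) 1) (ha : 0 < a)
    (t x y : ℝ) (ht : 0 < t) :
    min (2*α) (2 - 2*α) * gK (a*t) (y - x) ≤ skewP α a t x y ∧
    skewP α a t x y ≤ 2 * gK (a*t) (y - x) := by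
  obtain ⟨hα0, hα1⟩ := hα
  have hat : 0 < a * t := mul_pos ha ht
  have hg : 0 < gK (a*t) (y - x) := gK_pos hat _
  have hm1 : min (2*α) (2 - 2*α) ≤ 1 := by
    rcases le_total α (1/2) with h | h
    · exact le_trans (min_le_left _ _) (by linarith)
    · exact le_trans (min_le_right _ _) (by linarith)
  unfold skewP
  split_ifs with hx hy hy <;>
    [skip; skip; skip; skip]
  · -- x ≥ 0, y ≥ 0
    have hgp : 0 < gK (a*t) (y + x) := gK_pos hat _
    have hle : gK (a*t) (y + x) ≤ gK (a*t) (y - x) := gK_arg_le hat (by positivity)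
    constructor
    · rcases le_total α (1/2) with h | h
      · have : min (2*α) (2 - 2*α) = 2*α := min_eq_left (by linarith)
        rw [this]; nlinarith
      · have : min (2*α) (2 - 2*α) = 2 - 2*α := min_eq_right (by linarith)
        rw [this]; nlinarith
    · rcases le_total α (1/2) with h | h
      · nlinarith
      · nlinarith
  · -- x ≥ 0, y < 0
    constructor
    · nlinarith [min_le_right (2*α) (2 - 2*α)]
    · nlinarith
  · -- x < 0, y < 0
    have hgp : 0 < gK (a*t) (y + x) := gK_pos hat _
    have hle : gK (a*t) (y + x) ≤ gK (a*t) (y - x) := by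
      apply gK_arg_le hat
      nlinarith
    constructor
    · rcases le_total α (1/2) with h | h
      · nlinarith [min_le_left (2*α) (2 - 2*α)]
      · nlinarith [min_le_right (2*α) (2 - 2*α)]
    · rcases le_total α (1/2) with h | h
      · nlinarith
      · nlinarith
  · -- x < 0, y ≥ 0
    constructor
    · nlinarith [min_le_left (2*α) (2 - 2*α)]
    · nlinarith

theorem skew_density_aronson (α a : ℝ) (hα : α ∈ Set.Ioo (0:ℝ) 1) (ha : 0 < a) :
    ∃ C c : ℝ, 1 < C ∧ 1 < c ∧ ∀ t x y : ℝ, 0 < t →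
      C⁻¹ * gK (t / c) (y - x) ≤ skewP α a t x y ∧
      skewP α a t x y ≤ C * gK (c * t) (y - x) := by
  obtain ⟨hα0, hα1⟩ := hα
  set m : ℝ := min (2*α) (2 - 2*α) with hm_def
  have hm : 0 < m := lt_min (by linarith) (by linarith)
  set c : ℝ := max a a⁻¹ + 1 with hc_def
  have hca : a < c := by
    have h := le_max_left a a⁻¹
    rw [hc_def]; linarith
  have hcai : a⁻¹ < c := by
    have h := le_max_right a a⁻¹
    rw [hc_def]; linarith
  have hc0 : 0 < c := lt_trans ha hca
  have hc1 : 1 < c := by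
    rcases le_total a 1 with h | h
    · have : (1:ℝ) ≤ a⁻¹ := by
        nlinarith [mul_inv_cancel₀ (ne_of_gt ha), inv_nonneg.2 ha.le]
      exact lt_of_le_of_lt this hcai
    · linarith
  have hac1 : 1 < a * c := by
    have := (inv_lt_iff_one_lt_mul₀ ha).1 hcai
    linarith [mul_comm a c]
  set C : ℝ := max (2 * Real.sqrt (c / a)) (Real.sqrt (a * c) / m) + 1 with hC_def
  have hsq : 0 < Real.sqrt (c / a) := Real.sqrt_pos.2 (by positivity)
  have hC1 : 1 < C := by
    have : 0 < max (2 * Real.sqrt (c / a)) (Real.sqrt (a * c) / m) :=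
      lt_of_lt_of_le (by positivity) (le_max_left _ _)
    simp only [hC_def]; linarith
  have hC0 : 0 < C := lt_trans one_pos hC1
  refine ⟨C, c, hC1, hc1, fun t x y ht => ?_⟩
  obtain ⟨hlow, hup⟩ := skew_sandwich ⟨hα0, hα1⟩ ha t x y ht
  constructor
  · -- lower bound
    have h1 : gK (t / c) (y - x) ≤ Real.sqrt (a * c) * gK (a * t) (y - x) := by
      have h2 : t / c ≤ a * t := by
        rw [div_le_iff₀ hc0]
        nlinarith
      have := gK_le_gK (by positivity : (0:ℝ) < t / c) h2 (y - x)
      have he : (a * t) / (t / c) = a * c := by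
        field_simp
      rwa [he] at this
    have hs0 : 0 < Real.sqrt (a * c) := Real.sqrt_pos.2 (by positivity)
    have hCge : Real.sqrt (a * c) / m ≤ C := by
      have h := le_max_right (2 * Real.sqrt (c / a)) (Real.sqrt (a * c) / m)
      rw [hC_def]; linarith
    have hCi : C⁻¹ ≤ m / Real.sqrt (a * c) := by
      rw [div_le_iff₀ hm] at hCge
      rw [le_div_iff₀ hs0, inv_mul_le_iff₀ hC0]
      linarith
    calc C⁻¹ * gK (t / c) (y - x) ≤ (m / Real.sqrt (a * c)) * gK (t / c) (y - x) := by
          apply mul_le_mul_of_nonneg_right hCi (le_of_lt (gK_pos (by positivity) _))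
      _ ≤ (m / Real.sqrt (a * c)) * (Real.sqrt (a * c) * gK (a * t) (y - x)) := by
          apply mul_le_mul_of_nonneg_left h1 (by positivity)
      _ = m * gK (a * t) (y - x) := by
          field_simp
      _ ≤ skewP α a t x y := hlow
  · -- upper bound
    have h1 : gK (a * t) (y - x) ≤ Real.sqrt (c / a) * gK (c * t) (y - x) := by
      have h2 : a * t ≤ c * t := by nlinarith
      have := gK_le_gK (by positivity : (0:ℝ) < a * t) h2 (y - x)
      have he : (c * t) / (a * t) = c / a := by
        field_simp
      rwa [he] at this
    have hgc : 0 ≤ gK (c * t) (y - x) := le_of_lt (gK_pos (by positivity) _)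
    have h2C : 2 * Real.sqrt (c / a) ≤ C := by
      have := le_max_left (2 * Real.sqrt (c / a)) (Real.sqrt (a * c) / m)
      simp only [hC_def]; linarith
    calc skewP α a t x y ≤ 2 * gK (a * t) (y - x) := hup
      _ ≤ 2 * (Real.sqrt (c / a) * gK (c * t) (y - x)) := by
          apply mul_le_mul_of_nonneg_left h1 (by norm_num)
      _ = (2 * Real.sqrt (c / a)) * gK (c * t) (y - x) := by ring
      _ ≤ C * gK (c * t) (y - x) := mul_le_mul_of_nonneg_right h2C hgc
end

section
/- Let g_C(z) = (2πC)^{-1/2} exp(-z²/(2C)), c > 0, and 0 < h, 0 < t_k < t_i with t_i − t_k > 0. Then by the Cauchy–Schwarz inequality, for all x, z ∈ ℝ: ∫_ℝ g_{ch}(u) g_{c t_k}(u − x) g_{c(t_i − t_k)}(z − u) du ≤ C' h^{-1/4} (t_i − t_k)^{-1/4} (g_{c t_{k+1}}(x))^{1/2} (g_{c t_i}(z − x))^{1/2}, where t_{k+1} = t_k + h and C' depends only on c. -/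
open Real MeasureTheory

lemma gK_nonneg {C : ℝ} (hC : 0 < C) (z : ℝ) : 0 ≤ gK C z := by
  have h2 : (0:ℝ) < 2 * π * C := by positivity
  exact mul_nonneg (Real.rpow_nonneg h2.le _) (Real.exp_nonneg _)

lemma gK_neg (C z : ℝ) : gK C (-z) = gK C z := by simp [gK]

lemma gK_eq {C : ℝ} (z : ℝ) :
    gK C z = (2 * π * C) ^ (-(1:ℝ)/2) * Real.exp (-(1/(2*C)) * z^2) := by
  rw [gK, show -(z^2)/(2*C) = -(1/(2*C)) * z^2 by ring]

lemma continuous_gK (C : ℝ) : Continuous (gK C) := by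
  unfold gK; fun_prop

lemma integrable_gK {C : ℝ} (hC : 0 < C) : Integrable (gK C) := by
  have hb : (0:ℝ) < 1/(2*C) := by positivity
  have := (integrable_exp_neg_mul_sq hb).const_mul ((2 * π * C) ^ (-(1:ℝ)/2))
  refine this.congr ?_
  filter_upwards with z
  rw [gK_eq]

lemma integral_gK {C : ℝ} (hC : 0 < C) : ∫ z, gK C z = 1 := by
  have hb : (0:ℝ) < 1/(2*C) := by positivity
  have h2 : (0:ℝ) < 2 * π * C := by positivity
  simp_rw [gK_eq]
  rw [integral_const_mul, integral_gaussian, show π / (1/(2*C)) = 2*π*C by field_simp,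
    Real.sqrt_eq_rpow, ← Real.rpow_add h2]
  norm_num

lemma gK_mul {a b : ℝ} (ha : 0 < a) (hb : 0 < b) (p q u : ℝ) :
    gK a (u - p) * gK b (q - u) =
      gK (a + b) (q - p) * gK (a*b/(a+b)) (u - (b*p + a*q)/(a+b)) := by
  have hab : (0:ℝ) < a + b := by linarith
  have h1 : (0:ℝ) < 2 * π * a := by positivity
  have h2 : (0:ℝ) < 2 * π * b := by positivity
  have h3 : (0:ℝ) < 2 * π * (a+b) := by positivity
  have h4 : (0:ℝ) < 2 * π * (a*b/(a+b)) := by positivity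
  unfold gK
  rw [mul_mul_mul_comm, mul_mul_mul_comm _ (Real.exp _), ← Real.mul_rpow h1.le h2.le,
    ← Real.mul_rpow h3.le h4.le, ← Real.exp_add, ← Real.exp_add]
  congr 2
  · field_simp
  · field_simp; ring

lemma integral_gK_mul {a b : ℝ} (ha : 0 < a) (hb : 0 < b) (p q : ℝ) :
    ∫ u, gK a (u - p) * gK b (q - u) = gK (a + b) (q - p) := by
  have hab : (0:ℝ) < a*b/(a+b) := by positivity
  simp_rw [gK_mul ha hb p q]
  rw [integral_const_mul, integral_sub_right_eq_self (gK (a*b/(a+b))) _, integral_gK hab, mul_one]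

lemma integrable_gK_mul {a b : ℝ} (ha : 0 < a) (hb : 0 < b) (p q : ℝ) :
    Integrable (fun u => gK a (u - p) * gK b (q - u)) := by
  have hab : (0:ℝ) < a*b/(a+b) := by positivity
  simp_rw [gK_mul ha hb p q]
  exact ((integrable_gK hab).comp_sub_right _).const_mul _

lemma gK_sq {C : ℝ} (hC : 0 < C) (w : ℝ) :
    gK C w ^ 2 = (4*π*C) ^ (-(1:ℝ)/2) * gK (C/2) w := by
  have h2 : (0:ℝ) < 2 * π * C := by positivity
  have h4 : (0:ℝ) < 4 * π * C := by positivity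
  have h5 : (0:ℝ) < 2 * π * (C/2) := by positivity
  unfold gK
  rw [mul_pow, ← Real.exp_nat_mul, ← Real.rpow_natCast ((2*π*C) ^ (-(1:ℝ)/2)) 2,
    ← Real.rpow_mul h2.le, ← mul_assoc, ← Real.mul_rpow h4.le h5.le]
  have : (4*π*C) * (2*π*(C/2)) = (2*π*C)^(2:ℕ) := by ring
  rw [this, ← Real.rpow_natCast (2*π*C) 2, ← Real.rpow_mul h2.le]
  norm_num
  field_simp
  ring
  simp

lemma gK_le {C₁ C₂ : ℝ} (h1 : 0 < C₁) (h12 : C₁ ≤ C₂) (w : ℝ) :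
    gK C₁ w ≤ (C₂/C₁) ^ ((1:ℝ)/2) * gK C₂ w := by
  have h2 : (0:ℝ) < C₂ := lt_of_lt_of_le h1 h12
  have e1 : (0:ℝ) < 2 * π * C₁ := by positivity
  have e2 : (0:ℝ) < 2 * π * C₂ := by positivity
  unfold gK
  rw [← mul_assoc]
  have hpre : (2*π*C₁) ^ (-(1:ℝ)/2) = (C₂/C₁) ^ ((1:ℝ)/2) * (2*π*C₂) ^ (-(1:ℝ)/2) := by
    rw [show (-(1:ℝ)/2) = -((1:ℝ)/2) by norm_num, Real.rpow_neg e1.le, Real.rpow_neg e2.le,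
      ← Real.inv_rpow e2.le, ← Real.mul_rpow (by positivity) (by positivity),
      ← Real.inv_rpow e1.le]
    congr 1
    field_simp
  rw [hpre, mul_assoc ((C₂/C₁) ^ ((1:ℝ)/2)) _ (Real.exp (-(w^2)/(2*C₁))),
    mul_assoc ((C₂/C₁) ^ ((1:ℝ)/2)) _ (Real.exp (-(w^2)/(2*C₂)))]
  have hexp : Real.exp (-(w^2) / (2 * C₁)) ≤ Real.exp (-(w^2) / (2 * C₂)) := by
    refine Real.exp_le_exp.2 ?_
    rw [div_le_div_iff₀ (by positivity) (by positivity)]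
    nlinarith [sq_nonneg w]
  exact mul_le_mul_of_nonneg_left
    (mul_le_mul_of_nonneg_left hexp (by positivity)) (by positivity)

lemma sq_factor {c d s : ℝ} (hc : 0 < c) (hd : 0 < d) (hs : 0 < s) (p q : ℝ) :
    ∫ u, gK (c*d) (q - u) ^ 2 * gK (c*s) (u - p) =
      (4*π*(c*d)) ^ (-(1:ℝ)/2) * gK (c*s + c*d/2) (q - p) := by
  have hcd : (0:ℝ) < c*d := by positivity
  have hcs : (0:ℝ) < c*s := by positivity
  simp_rw [gK_sq hcd, mul_assoc, mul_comm (gK (c*d/2) _)]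
  rw [integral_const_mul, integral_gK_mul hcs (by positivity) p q]

lemma factor_bound {c d s : ℝ} (hc : 0 < c) (hd : 0 < d) (hs : 0 < s) (w : ℝ) :
    ((4*π*(c*d)) ^ (-(1:ℝ)/2) * gK (c*s + c*d/2) w) ^ ((1:ℝ)/2)
      ≤ 2 ^ ((1:ℝ)/4) * (4*π*c) ^ (-(1:ℝ)/4) * d ^ (-(1:ℝ)/4) *
        gK (c*(s+d)) w ^ ((1:ℝ)/2) := by
  have hC1 : (0:ℝ) < c*s + c*d/2 := by positivity
  have hC2 : (0:ℝ) < c*(s+d) := by positivity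
  have h12 : c*s + c*d/2 ≤ c*(s+d) := by nlinarith
  have hratio : (c*(s+d))/(c*s + c*d/2) ≤ 2 := by
    rw [div_le_iff₀ hC1]; nlinarith
  have hmono : gK (c*s + c*d/2) w ≤ 2 ^ ((1:ℝ)/2) * gK (c*(s+d)) w := by
    refine (gK_le hC1 h12 w).trans ?_
    exact mul_le_mul_of_nonneg_right
      (Real.rpow_le_rpow (by positivity) hratio (by norm_num)) (gK_nonneg hC2 w)
  have h4 : (0:ℝ) < 4*π*(c*d) := by positivity
  calc ((4*π*(c*d)) ^ (-(1:ℝ)/2) * gK (c*s + c*d/2) w) ^ ((1:ℝ)/2)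
      ≤ ((4*π*(c*d)) ^ (-(1:ℝ)/2) * (2 ^ ((1:ℝ)/2) * gK (c*(s+d)) w)) ^ ((1:ℝ)/2) :=
        Real.rpow_le_rpow (mul_nonneg (by positivity) (gK_nonneg hC1 w))
          (mul_le_mul_of_nonneg_left hmono (by positivity)) (by norm_num)
    _ = 2 ^ ((1:ℝ)/4) * (4*π*c) ^ (-(1:ℝ)/4) * d ^ (-(1:ℝ)/4) *
        gK (c*(s+d)) w ^ ((1:ℝ)/2) := by
        rw [Real.mul_rpow (by positivity) (mul_nonneg (by positivity) (gK_nonneg hC2 w)),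
          Real.mul_rpow (by positivity) (gK_nonneg hC2 w),
          ← Real.rpow_mul h4.le, ← Real.rpow_mul (by norm_num : (0:ℝ) ≤ 2),
          show 4*π*(c*d) = (4*π*c)*d by ring,
          Real.mul_rpow (by positivity) hd.le]
        norm_num
        ring

theorem cauchy_schwarz_gaussian_bound (c : ℝ) (hc : 0 < c) :
    ∃ C' > (0:ℝ), ∀ h tk ti x z : ℝ, 0 < h → 0 < tk → tk < ti →
      ∫ u : ℝ, gK (c * h) u * gK (c * tk) (u - x) * gK (c * (ti - tk)) (z - u) ≤
        C' * h ^ (-(1:ℝ)/4) * (ti - tk) ^ (-(1:ℝ)/4) *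
          (gK (c * (tk + h)) x) ^ ((1:ℝ)/2) * (gK (c * ti) (z - x)) ^ ((1:ℝ)/2) := by
  set K : ℝ := 2 ^ ((1:ℝ)/4) * (4*π*c) ^ (-(1:ℝ)/4) with hK
  have hKpos : 0 < K := by positivity
  refine ⟨K * K, by positivity, fun h tk ti x z hh htk hki => ?_⟩
  have hd2 : (0:ℝ) < ti - tk := by linarith
  have hch : (0:ℝ) < c * h := by positivity
  have hctk : (0:ℝ) < c * tk := by positivity
  have hcd2 : (0:ℝ) < c * (ti - tk) := by positivity
  set ρ : ℝ → ℝ := fun u => gK (c * tk) (u - x) with hρ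
  set F : ℝ → ℝ := fun u => gK (c * h) u * Real.sqrt (ρ u) with hF
  set G : ℝ → ℝ := fun u => gK (c * (ti - tk)) (z - u) * Real.sqrt (ρ u) with hG
  have hρ0 : ∀ u, 0 ≤ ρ u := fun u => gK_nonneg hctk _
  -- pointwise: the integrand is F * G
  have hFG : ∀ u, gK (c * h) u * gK (c * tk) (u - x) * gK (c * (ti - tk)) (z - u)
      = F u * G u := by
    intro u
    simp only [hF, hG, hρ]
    rw [mul_mul_mul_comm, Real.mul_self_sqrt (hρ0 u)]
    ring
  -- squares
  have hF2 : ∀ u, F u ^ 2 = gK (c * h) (0 - u) ^ 2 * gK (c * tk) (u - x) := by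
    intro u
    simp only [hF, hρ, mul_pow, Real.sq_sqrt (hρ0 u), Real.sq_sqrt (gK_nonneg hctk (u - x)), zero_sub, gK_neg]
  have hG2 : ∀ u, G u ^ 2 = gK (c * (ti - tk)) (z - u) ^ 2 * gK (c * tk) (u - x) := by
    intro u
    simp only [hG, hρ, mul_pow, Real.sq_sqrt (hρ0 u), Real.sq_sqrt (gK_nonneg hctk (u - x))]
  -- integrability of squares
  have hIntF2 : Integrable (fun u => F u ^ 2) := by
    have : Integrable (fun u =>
        (4*π*(c*h)) ^ (-(1:ℝ)/2) * (gK (c*tk) (u - x) * gK (c*h/2) (0 - u))) :=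
      (integrable_gK_mul hctk (by positivity) x 0).const_mul _
    refine this.congr (Filter.Eventually.of_forall fun u => ?_)
    beta_reduce
    rw [hF2 u, gK_sq hch, zero_sub, gK_neg]
    ring
  have hIntG2 : Integrable (fun u => G u ^ 2) := by
    have : Integrable (fun u =>
        (4*π*(c*(ti-tk))) ^ (-(1:ℝ)/2) * (gK (c*tk) (u - x) * gK (c*(ti-tk)/2) (z - u))) :=
      (integrable_gK_mul hctk (by positivity) x z).const_mul _
    refine this.congr (Filter.Eventually.of_forall fun u => ?_)
    beta_reduce
    rw [hG2 u, gK_sq hcd2]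
    ring
  -- measurability
  have hFc : Continuous F := by
    apply ((continuous_gK _)).mul
    exact Real.continuous_sqrt.comp ((continuous_gK _).comp (continuous_id.sub continuous_const))
  have hGc : Continuous G := by
    apply (((continuous_gK _).comp (continuous_const.sub continuous_id))).mul
    exact Real.continuous_sqrt.comp ((continuous_gK _).comp (continuous_id.sub continuous_const))
  have hmemF : MemLp F (ENNReal.ofReal 2) volume := by
    rw [show ENNReal.ofReal 2 = 2 by simp [ENNReal.ofReal_ofNat]]
    exact (memLp_two_iff_integrable_sq hFc.aestronglyMeasurable).2 hIntF2
  have hmemG : MemLp G (ENNReal.ofReal 2) volume := by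
    rw [show ENNReal.ofReal 2 = 2 by simp [ENNReal.ofReal_ofNat]]
    exact (memLp_two_iff_integrable_sq hGc.aestronglyMeasurable).2 hIntG2
  -- Cauchy-Schwarz
  have hpq : Real.HolderConjugate 2 2 := ⟨by norm_num, by norm_num, by norm_num⟩
  have hcs := integral_mul_le_Lp_mul_Lq_of_nonneg hpq
    (Filter.Eventually.of_forall fun u =>
      mul_nonneg (gK_nonneg hch u) (Real.sqrt_nonneg _))
    (Filter.Eventually.of_forall fun u =>
      mul_nonneg (gK_nonneg hcd2 _) (Real.sqrt_nonneg _)) hmemF hmemG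
  simp_rw [show ((2:ℝ)) = ((2:ℕ):ℝ) from by norm_num, Real.rpow_natCast] at hcs
  -- evaluate the squared integrals
  have hevF : ∫ u, F u ^ 2 = (4*π*(c*h)) ^ (-(1:ℝ)/2) * gK (c*tk + c*h/2) x := by
    calc ∫ u, F u ^ 2 = ∫ u, gK (c*h) (0 - u) ^ 2 * gK (c*tk) (u - x) := by
          exact integral_congr_ae (Filter.Eventually.of_forall hF2)
      _ = (4*π*(c*h)) ^ (-(1:ℝ)/2) * gK (c*tk + c*h/2) (0 - x) := sq_factor hc hh htk x 0
      _ = (4*π*(c*h)) ^ (-(1:ℝ)/2) * gK (c*tk + c*h/2) x := by rw [zero_sub, gK_neg]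
  have hevG : ∫ u, G u ^ 2 =
      (4*π*(c*(ti-tk))) ^ (-(1:ℝ)/2) * gK (c*tk + c*(ti-tk)/2) (z - x) := by
    calc ∫ u, G u ^ 2 = ∫ u, gK (c*(ti-tk)) (z - u) ^ 2 * gK (c*tk) (u - x) := by
          exact integral_congr_ae (Filter.Eventually.of_forall hG2)
      _ = _ := sq_factor hc hd2 htk x z
  rw [hevF, hevG] at hcs
  -- factor bounds
  have hb4G : (0:ℝ) < 4*π*(c*(ti-tk)) := mul_pos (by positivity) hcd2
  have hCG : (0:ℝ) < c*tk + c*(ti-tk)/2 := add_pos hctk (by linarith)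
  have hgF : (0:ℝ) < c*(tk+h) := by positivity
  have hbF := factor_bound hc hh htk x
  have hbG := factor_bound hc hd2 htk (z - x)
  rw [show tk + (ti - tk) = ti by ring] at hbG
  calc ∫ u : ℝ, gK (c * h) u * gK (c * tk) (u - x) * gK (c * (ti - tk)) (z - u)
      = ∫ u, F u * G u := integral_congr_ae (Filter.Eventually.of_forall hFG)
    _ ≤ ((4*π*(c*h)) ^ (-(1:ℝ)/2) * gK (c*tk + c*h/2) x) ^ ((1:ℝ)/2) *
        ((4*π*(c*(ti-tk))) ^ (-(1:ℝ)/2) * gK (c*tk + c*(ti-tk)/2) (z - x)) ^ ((1:ℝ)/2) := by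
          convert hcs using 3 <;> norm_num
    _ ≤ (K * h ^ (-(1:ℝ)/4) * gK (c*(tk+h)) x ^ ((1:ℝ)/2)) *
        (K * (ti-tk) ^ (-(1:ℝ)/4) * gK (c*ti) (z - x) ^ ((1:ℝ)/2)) := by
          refine mul_le_mul ?_ ?_
            (Real.rpow_nonneg (mul_nonneg (Real.rpow_nonneg hb4G.le _)
              (gK_nonneg hCG _)) _)
            (mul_nonneg (mul_nonneg hKpos.le (Real.rpow_nonneg hh.le _))
              (Real.rpow_nonneg (gK_nonneg hgF _) _))
          · calc _ ≤ 2 ^ ((1:ℝ)/4) * (4*π*c) ^ (-(1:ℝ)/4) * h ^ (-(1:ℝ)/4) *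
                gK (c*(tk+h)) x ^ ((1:ℝ)/2) := hbF
              _ = _ := by rw [hK]
          · calc _ ≤ 2 ^ ((1:ℝ)/4) * (4*π*c) ^ (-(1:ℝ)/4) * (ti-tk) ^ (-(1:ℝ)/4) *
                gK (c*ti) (z - x) ^ ((1:ℝ)/2) := hbG
              _ = _ := by rw [hK]
    _ = K * K * h ^ (-(1:ℝ)/4) * (ti - tk) ^ (-(1:ℝ)/4) *
          (gK (c * (tk + h)) x) ^ ((1:ℝ)/2) * (gK (c * ti) (z - x)) ^ ((1:ℝ)/2) := by ring
end

section
/- Let η ∈ (0,1], T > 0, h = T/N, t_k = kh. There exists C > 0 independent of N such that for all i with 2 ≤ i ≤ N: h^{7/4} ∑_{k=0}^{i-2} t_i^{1/4} t_{k+1}^{-1/4} (t_i − t_k)^{-(7-2η)/4} ≤ C h^{η/2}. -/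
open Real Finset

lemma quarter_step (k : ℕ) :
    ((k:ℝ)+1) ^ (-(1:ℝ)/4) ≤ (4/3) * (((k:ℝ)+1) ^ ((3:ℝ)/4) - (k:ℝ) ^ ((3:ℝ)/4)) := by
  set a : ℝ := (k:ℝ) with ha
  have ha0 : (0:ℝ) ≤ a := Nat.cast_nonneg k
  have hb0 : (0:ℝ) < a + 1 := by linarith
  have hgm : a ^ ((3:ℝ)/4) * (a+1) ^ ((1:ℝ)/4) ≤ (3/4) * a + (1/4) * (a+1) :=
    Real.geom_mean_le_arith_mean2_weighted (by norm_num) (by norm_num) ha0 hb0.le (by norm_num)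
  have hy : (0:ℝ) < (a+1) ^ ((1:ℝ)/4) := Real.rpow_pos_of_pos hb0 _
  have hmul : (a+1) ^ (-(1:ℝ)/4) * (a+1) ^ ((1:ℝ)/4) = 1 := by
    rw [← Real.rpow_add hb0]; norm_num
  have hmul2 : (a+1) ^ ((3:ℝ)/4) * (a+1) ^ ((1:ℝ)/4) = a + 1 := by
    rw [← Real.rpow_add hb0]; norm_num
  nlinarith [hy, hmul, hmul2, hgm, Real.rpow_nonneg hb0.le (-(1:ℝ)/4)]

lemma sum_quarter (n : ℕ) :
    ∑ k ∈ Finset.range n, ((k:ℝ)+1) ^ (-(1:ℝ)/4) ≤ (4/3) * (n:ℝ) ^ ((3:ℝ)/4) := by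
  have h := Finset.sum_range_sub (fun k : ℕ => (k:ℝ) ^ ((3:ℝ)/4)) n
  calc ∑ k ∈ Finset.range n, ((k:ℝ)+1) ^ (-(1:ℝ)/4)
      ≤ ∑ k ∈ Finset.range n, (4/3) * ((((k+1:ℕ)):ℝ) ^ ((3:ℝ)/4) - (k:ℝ) ^ ((3:ℝ)/4)) := by
        refine Finset.sum_le_sum fun k _ => ?_
        push_cast
        exact quarter_step k
    _ = (4/3) * ((n:ℝ) ^ ((3:ℝ)/4) - ((0:ℕ):ℝ) ^ ((3:ℝ)/4)) := by
        rw [← Finset.mul_sum, h]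
    _ ≤ (4/3) * (n:ℝ) ^ ((3:ℝ)/4) := by
        norm_num [Real.zero_rpow]


lemma fivefourth_step (b : ℝ) (hb : 2 ≤ b) :
    b ^ (-(5:ℝ)/4) ≤ 4 * ((b-1) ^ (-(1:ℝ)/4) - b ^ (-(1:ℝ)/4)) := by
  have ha0 : (0:ℝ) < b - 1 := by linarith
  have hb0 : (0:ℝ) < b := by linarith
  set s := (b-1) ^ ((1:ℝ)/4) with hs_def
  set t := b ^ ((1:ℝ)/4) with ht_def
  set r := b ^ ((3:ℝ)/4) with hr_def
  have hs : 0 < s := Real.rpow_pos_of_pos ha0 _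
  have ht : 0 < t := Real.rpow_pos_of_pos hb0 _
  have hst : s ≤ t := Real.rpow_le_rpow ha0.le (by linarith) (by norm_num)
  have h1 : s * r ≤ (1/4) * (b-1) + (3/4) * b :=
    Real.geom_mean_le_arith_mean2_weighted (by norm_num) (by norm_num) ha0.le hb0.le (by norm_num)
  have hrt : r * t = b := by rw [hr_def, ht_def, ← Real.rpow_add hb0]; norm_num
  have hsv : s * ((b-1) ^ (-(1:ℝ)/4)) = 1 := by
    rw [hs_def, ← Real.rpow_add ha0]; norm_num
  have htu : t * (b ^ (-(1:ℝ)/4)) = 1 := by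
    rw [ht_def, ← Real.rpow_add hb0]; norm_num
  have hwb : b ^ (-(5:ℝ)/4) * b = b ^ (-(1:ℝ)/4) := by
    nth_rewrite 2 [show b = b ^ (1:ℝ) by rw [Real.rpow_one]]
    rw [← Real.rpow_add hb0]; norm_num
  set u := b ^ (-(1:ℝ)/4) with hu_def
  set v := (b-1) ^ (-(1:ℝ)/4) with hv_def
  set w := b ^ (-(5:ℝ)/4) with hw_def
  have hu : 0 < u := Real.rpow_pos_of_pos hb0 _
  have hv : 0 < v := Real.rpow_pos_of_pos ha0 _
  have hw : 0 < w := Real.rpow_pos_of_pos hb0 _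
  -- 4*s*b ≤ (4*b-1)*t
  have k1 : 4*s*b ≤ (4*b-1)*t := by nlinarith [mul_le_mul_of_nonneg_right h1 ht.le, hrt]
  have k2 : s*(4*b+1) ≤ 4*b*t := by nlinarith [k1, hst]
  -- multiply k2 by v*u
  have k3 : s*(4*b+1)*(v*u) ≤ 4*b*t*(v*u) :=
    mul_le_mul_of_nonneg_right k2 (mul_nonneg hv.le hu.le)
  have k4 : (4*b+1)*u ≤ 4*b*v := by nlinarith [k3, hsv, htu, hv, hu]
  nlinarith [k4, hwb, hb0, hv, hu]




lemma sum_fivefourth (i : ℕ) (hi : 2 ≤ i) :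
    ∑ k ∈ Finset.range (i-1), ((i:ℝ)-(k:ℝ)) ^ (-(5:ℝ)/4) ≤ 4 := by
  have h := Finset.sum_range_sub (fun k : ℕ => ((i:ℝ)-(k:ℝ)) ^ (-(1:ℝ)/4)) (i-1)
  calc ∑ k ∈ Finset.range (i-1), ((i:ℝ)-(k:ℝ)) ^ (-(5:ℝ)/4)
      ≤ ∑ k ∈ Finset.range (i-1),
          4 * (((i:ℝ)-((k+1:ℕ):ℝ)) ^ (-(1:ℝ)/4) - ((i:ℝ)-(k:ℝ)) ^ (-(1:ℝ)/4)) := by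
        refine Finset.sum_le_sum fun k hk => ?_
        have hk' : k < i - 1 := Finset.mem_range.mp hk
        have hb : (2:ℝ) ≤ (i:ℝ) - (k:ℝ) := by
          have : k + 2 ≤ i := by omega
          have := Nat.cast_le (α := ℝ).mpr this
          push_cast at this ⊢; linarith
        have := fivefourth_step ((i:ℝ) - (k:ℝ)) hb
        push_cast
        rw [show (i:ℝ) - ((k:ℝ) + 1) = (i:ℝ) - (k:ℝ) - 1 by ring]
        exact this
    _ = 4 * (((i:ℝ)-((i-1:ℕ):ℝ)) ^ (-(1:ℝ)/4) - ((i:ℝ)-((0:ℕ):ℝ)) ^ (-(1:ℝ)/4)) := by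
        rw [← Finset.mul_sum, h]
    _ ≤ 4 := by
        have h1 : ((i:ℝ)-((i-1:ℕ):ℝ)) = 1 := by
          have : ((i-1:ℕ):ℝ) = (i:ℝ) - 1 := by
            have : 1 ≤ i := by omega
            push_cast [this]; ring
          rw [this]; ring
        have h2 : (0:ℝ) ≤ ((i:ℝ)-((0:ℕ):ℝ)) ^ (-(1:ℝ)/4) := by
          have e : ((i:ℝ)-((0:ℕ):ℝ)) = (i:ℝ) := by push_cast; ring
          rw [e]; exact Real.rpow_nonneg (Nat.cast_nonneg i) _
        rw [h1, Real.one_rpow]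
        linarith




lemma pointwise (η : ℝ) (hη1 : 0 < η) (hη2 : η ≤ 1) (i k : ℕ) (hi : 2 ≤ i) (hk : k < i - 1) :
    (i:ℝ) ^ ((1:ℝ)/4) * ((k:ℝ)+1) ^ (-(1:ℝ)/4) * ((i:ℝ)-(k:ℝ)) ^ (-((7-2*η)/4)) ≤
      (2:ℝ) ^ ((7:ℝ)/4) * (i:ℝ) ^ ((1:ℝ)/4 - (7-2*η)/4) * ((k:ℝ)+1) ^ (-(1:ℝ)/4)
        + (2:ℝ) ^ ((1:ℝ)/4) * ((i:ℝ)-(k:ℝ)) ^ (-(5:ℝ)/4) := by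
  set p : ℝ := (7-2*η)/4 with hp_def
  have hp1 : (5:ℝ)/4 ≤ p := by rw [hp_def]; linarith
  have hp2 : p ≤ (7:ℝ)/4 := by rw [hp_def]; linarith
  have hb2 : (2:ℝ) ≤ (i:ℝ) := by exact_mod_cast hi
  have hb0 : (0:ℝ) < (i:ℝ) := by linarith
  have hx2 : (2:ℝ) ≤ (i:ℝ) - (k:ℝ) := by
    have : k + 2 ≤ i := by omega
    have := Nat.cast_le (α := ℝ).mpr this
    push_cast at this; linarith
  have hx0 : (0:ℝ) < (i:ℝ) - (k:ℝ) := by linarith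
  have hc0 : (0:ℝ) < (k:ℝ) + 1 := by positivity
  have hA : (0:ℝ) ≤ (2:ℝ) ^ ((7:ℝ)/4) * (i:ℝ) ^ ((1:ℝ)/4 - p) * ((k:ℝ)+1) ^ (-(1:ℝ)/4) := by
    positivity
  have hB : (0:ℝ) ≤ (2:ℝ) ^ ((1:ℝ)/4) * ((i:ℝ)-(k:ℝ)) ^ (-(5:ℝ)/4) := by positivity
  rcases le_or_gt (2*k) i with hcase | hcase
  · -- k small : i - k ≥ i/2
    have hhalf : (i:ℝ)/2 ≤ (i:ℝ) - (k:ℝ) := by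
      have := Nat.cast_le (α := ℝ).mpr hcase
      push_cast at this; linarith
    have s1 : ((i:ℝ)-(k:ℝ)) ^ (-p) ≤ ((i:ℝ)/2) ^ (-p) :=
      Real.rpow_le_rpow_of_nonpos (by positivity) hhalf (by linarith)
    have s2 : ((i:ℝ)/2) ^ (-p) = (i:ℝ) ^ (-p) * (2:ℝ) ^ p := by
      rw [Real.div_rpow hb0.le (by norm_num), Real.rpow_neg (by norm_num : (0:ℝ) ≤ 2)]
      field_simp
    have s3 : (2:ℝ) ^ p ≤ (2:ℝ) ^ ((7:ℝ)/4) :=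
      Real.rpow_le_rpow_of_exponent_le (by norm_num) hp2
    have key : ((i:ℝ)-(k:ℝ)) ^ (-p) ≤ (2:ℝ) ^ ((7:ℝ)/4) * (i:ℝ) ^ (-p) := by
      calc ((i:ℝ)-(k:ℝ)) ^ (-p) ≤ (i:ℝ) ^ (-p) * (2:ℝ) ^ p := by rw [← s2]; exact s1
        _ ≤ (2:ℝ) ^ ((7:ℝ)/4) * (i:ℝ) ^ (-p) := by
            have := mul_le_mul_of_nonneg_left s3 (Real.rpow_nonneg hb0.le (-p))
            linarith
    have e1 : (i:ℝ) ^ ((1:ℝ)/4) * (i:ℝ) ^ (-p) = (i:ℝ) ^ ((1:ℝ)/4 - p) := by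
      rw [← Real.rpow_add hb0]; ring_nf
    calc (i:ℝ) ^ ((1:ℝ)/4) * ((k:ℝ)+1) ^ (-(1:ℝ)/4) * ((i:ℝ)-(k:ℝ)) ^ (-p)
        ≤ (i:ℝ) ^ ((1:ℝ)/4) * ((k:ℝ)+1) ^ (-(1:ℝ)/4) * ((2:ℝ) ^ ((7:ℝ)/4) * (i:ℝ) ^ (-p)) := by
          exact mul_le_mul_of_nonneg_left key (by positivity)
      _ = (2:ℝ) ^ ((7:ℝ)/4) * (i:ℝ) ^ ((1:ℝ)/4 - p) * ((k:ℝ)+1) ^ (-(1:ℝ)/4) := by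
          rw [← e1]; ring
      _ ≤ _ := le_add_of_nonneg_right hB
  · -- k large : k+1 ≥ i/2
    have hhalf : (i:ℝ)/2 ≤ (k:ℝ) + 1 := by
      have : i ≤ 2*(k+1) := by omega
      have := Nat.cast_le (α := ℝ).mpr this
      push_cast at this; linarith
    have s1 : ((k:ℝ)+1) ^ (-(1:ℝ)/4) ≤ ((i:ℝ)/2) ^ (-(1:ℝ)/4) :=
      Real.rpow_le_rpow_of_nonpos (by positivity) hhalf (by norm_num)
    have s2 : ((i:ℝ)/2) ^ (-(1:ℝ)/4) = (i:ℝ) ^ (-(1:ℝ)/4) * (2:ℝ) ^ ((1:ℝ)/4) := by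
      rw [Real.div_rpow hb0.le (by norm_num)]
      rw [show (-(1:ℝ)/4) = -((1:ℝ)/4) by ring, Real.rpow_neg (by norm_num : (0:ℝ) ≤ 2)]
      field_simp
    have s3 : ((i:ℝ)-(k:ℝ)) ^ (-p) ≤ ((i:ℝ)-(k:ℝ)) ^ (-(5:ℝ)/4) :=
      Real.rpow_le_rpow_of_exponent_le (by linarith) (by linarith)
    have e1 : (i:ℝ) ^ ((1:ℝ)/4) * (i:ℝ) ^ (-(1:ℝ)/4) = 1 := by
      rw [← Real.rpow_add hb0]; norm_num
    calc (i:ℝ) ^ ((1:ℝ)/4) * ((k:ℝ)+1) ^ (-(1:ℝ)/4) * ((i:ℝ)-(k:ℝ)) ^ (-p)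
        ≤ (i:ℝ) ^ ((1:ℝ)/4) * (((i:ℝ) ^ (-(1:ℝ)/4) * (2:ℝ) ^ ((1:ℝ)/4))) *
            ((i:ℝ)-(k:ℝ)) ^ (-(5:ℝ)/4) := by
          apply mul_le_mul
          · apply mul_le_mul_of_nonneg_left _ (Real.rpow_nonneg hb0.le _)
            rw [← s2]; exact s1
          · exact s3
          · exact Real.rpow_nonneg hx0.le _
          · positivity
      _ = (2:ℝ) ^ ((1:ℝ)/4) * ((i:ℝ)-(k:ℝ)) ^ (-(5:ℝ)/4) := by
          rw [show (i:ℝ) ^ ((1:ℝ)/4) * ((i:ℝ) ^ (-(1:ℝ)/4) * (2:ℝ) ^ ((1:ℝ)/4)) =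
            ((i:ℝ) ^ ((1:ℝ)/4) * (i:ℝ) ^ (-(1:ℝ)/4)) * (2:ℝ) ^ ((1:ℝ)/4) by ring, e1]
          ring
      _ ≤ _ := le_add_of_nonneg_left hA




lemma sum_bound (η : ℝ) (hη1 : 0 < η) (hη2 : η ≤ 1) (i : ℕ) (hi : 2 ≤ i) :
    ∑ k ∈ Finset.range (i-1),
      (i:ℝ) ^ ((1:ℝ)/4) * ((k:ℝ)+1) ^ (-(1:ℝ)/4) * ((i:ℝ)-(k:ℝ)) ^ (-((7-2*η)/4)) ≤ 14 := by
  have hb0 : (0:ℝ) < (i:ℝ) := by positivity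
  have hb1 : (1:ℝ) ≤ (i:ℝ) := by exact_mod_cast (by omega : 1 ≤ i)
  set q : ℝ := (i:ℝ) ^ ((1:ℝ)/4 - (7-2*η)/4) with hq_def
  have hq : 0 ≤ q := Real.rpow_nonneg hb0.le _
  have t4 : (2:ℝ) ^ ((7:ℝ)/4) ≤ 4 := by
    have h24 : (2:ℝ) ^ (2:ℝ) = 4 := by
      rw [show (2:ℝ) = ((2:ℕ):ℝ) by norm_num, Real.rpow_natCast]
      norm_num
    calc (2:ℝ) ^ ((7:ℝ)/4) ≤ (2:ℝ) ^ (2:ℝ) :=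
          Real.rpow_le_rpow_of_exponent_le (by norm_num) (by norm_num)
      _ = 4 := h24
  have t5 : (2:ℝ) ^ ((1:ℝ)/4) ≤ 2 := by
    calc (2:ℝ) ^ ((1:ℝ)/4) ≤ (2:ℝ) ^ (1:ℝ) :=
          Real.rpow_le_rpow_of_exponent_le (by norm_num) (by norm_num)
      _ = 2 := Real.rpow_one 2
  have t1 : ((i-1:ℕ):ℝ) ^ ((3:ℝ)/4) ≤ (i:ℝ) ^ ((3:ℝ)/4) :=
    Real.rpow_le_rpow (Nat.cast_nonneg _) (by exact_mod_cast Nat.sub_le i 1) (by norm_num)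
  have t2 : q * (i:ℝ) ^ ((3:ℝ)/4) = (i:ℝ) ^ (1 - (7-2*η)/4) := by
    rw [hq_def, ← Real.rpow_add hb0]; ring_nf
  have t3 : (i:ℝ) ^ (1 - (7-2*η)/4) ≤ 1 :=
    Real.rpow_le_one_of_one_le_of_nonpos hb1 (by linarith)
  have hi34 : (0:ℝ) ≤ (i:ℝ) ^ ((3:ℝ)/4) := Real.rpow_nonneg hb0.le _
  calc ∑ k ∈ Finset.range (i-1),
        (i:ℝ) ^ ((1:ℝ)/4) * ((k:ℝ)+1) ^ (-(1:ℝ)/4) * ((i:ℝ)-(k:ℝ)) ^ (-((7-2*η)/4))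
      ≤ ∑ k ∈ Finset.range (i-1),
        ((2:ℝ) ^ ((7:ℝ)/4) * q * ((k:ℝ)+1) ^ (-(1:ℝ)/4)
          + (2:ℝ) ^ ((1:ℝ)/4) * ((i:ℝ)-(k:ℝ)) ^ (-(5:ℝ)/4)) := by
        refine Finset.sum_le_sum fun k hk => ?_
        exact pointwise η hη1 hη2 i k hi (Finset.mem_range.mp hk)
    _ = (2:ℝ) ^ ((7:ℝ)/4) * q * (∑ k ∈ Finset.range (i-1), ((k:ℝ)+1) ^ (-(1:ℝ)/4))
          + (2:ℝ) ^ ((1:ℝ)/4) * (∑ k ∈ Finset.range (i-1), ((i:ℝ)-(k:ℝ)) ^ (-(5:ℝ)/4)) := by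
        rw [Finset.sum_add_distrib, Finset.mul_sum, Finset.mul_sum]
    _ ≤ (2:ℝ) ^ ((7:ℝ)/4) * q * ((4/3) * ((i-1:ℕ):ℝ) ^ ((3:ℝ)/4)) + (2:ℝ) ^ ((1:ℝ)/4) * 4 := by
        apply add_le_add
        · exact mul_le_mul_of_nonneg_left (sum_quarter (i-1)) (by positivity)
        · exact mul_le_mul_of_nonneg_left (sum_fivefourth i hi) (by positivity)
    _ ≤ 4 * q * ((4/3) * (i:ℝ) ^ ((3:ℝ)/4)) + 2 * 4 := by
        apply add_le_add
        · refine mul_le_mul (mul_le_mul_of_nonneg_right t4 hq) (by linarith) (by positivity)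
            (by positivity)
        · exact mul_le_mul_of_nonneg_right t5 (by norm_num)
    _ = (16/3) * (q * (i:ℝ) ^ ((3:ℝ)/4)) + 8 := by ring
    _ ≤ (16/3) * 1 + 8 := by
        rw [t2]; linarith [t3]
    _ ≤ 14 := by norm_num

theorem discrete_sum_rate (η T : ℝ) (hη : η ∈ Set.Ioc (0:ℝ) 1) (hT : 0 < T) :
    ∃ C > (0:ℝ), ∀ N : ℕ, 1 ≤ N → ∀ i : ℕ, 2 ≤ i → i ≤ N →
      (T / N) ^ ((7:ℝ)/4) *
        ∑ k ∈ Finset.range (i - 1),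
          ((i:ℝ) * (T / N)) ^ ((1:ℝ)/4) * (((k:ℝ) + 1) * (T / N)) ^ (-(1:ℝ)/4) *
            ((i:ℝ) * (T / N) - (k:ℝ) * (T / N)) ^ (-((7 - 2*η)/4)) ≤
      C * (T / N) ^ (η / 2) := by
  obtain ⟨hη1, hη2⟩ := hη
  refine ⟨14, by norm_num, fun N hN i hi2 hiN => ?_⟩
  set h : ℝ := T / N with hh_def
  have hh : 0 < h := by
    have : (0:ℝ) < (N:ℝ) := by exact_mod_cast hN
    positivity
  have hsum_eq : ∀ k ∈ Finset.range (i-1),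
      ((i:ℝ) * h) ^ ((1:ℝ)/4) * (((k:ℝ) + 1) * h) ^ (-(1:ℝ)/4) *
        ((i:ℝ) * h - (k:ℝ) * h) ^ (-((7 - 2*η)/4)) =
      ((i:ℝ) ^ ((1:ℝ)/4) * ((k:ℝ)+1) ^ (-(1:ℝ)/4) * ((i:ℝ)-(k:ℝ)) ^ (-((7-2*η)/4)))
        * h ^ (-((7 - 2*η)/4)) := by
    intro k hk
    have hk' : k < i - 1 := Finset.mem_range.mp hk
    have hik : (0:ℝ) ≤ (i:ℝ) - (k:ℝ) := by
      have : k ≤ i := by omega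
      have := Nat.cast_le (α := ℝ).mpr this
      linarith
    have e3 : (i:ℝ) * h - (k:ℝ) * h = ((i:ℝ) - (k:ℝ)) * h := by ring
    have e4 : h ^ ((1:ℝ)/4) * h ^ (-(1:ℝ)/4) = 1 := by
      rw [← Real.rpow_add hh]; norm_num
    rw [e3, Real.mul_rpow (Nat.cast_nonneg i) hh.le,
        Real.mul_rpow (by positivity) hh.le, Real.mul_rpow hik hh.le]
    linear_combination ((i:ℝ) ^ ((1:ℝ)/4) * ((k:ℝ)+1) ^ (-(1:ℝ)/4) *
      ((i:ℝ)-(k:ℝ)) ^ (-((7-2*η)/4)) * h ^ (-((7 - 2*η)/4))) * e4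
  rw [Finset.sum_congr rfl hsum_eq, ← Finset.sum_mul, ← mul_comm (h ^ (-((7 - 2*η)/4)))]
  have hfact : h ^ ((7:ℝ)/4) * (h ^ (-((7 - 2*η)/4)) *
      ∑ k ∈ Finset.range (i-1),
        (i:ℝ) ^ ((1:ℝ)/4) * ((k:ℝ)+1) ^ (-(1:ℝ)/4) * ((i:ℝ)-(k:ℝ)) ^ (-((7-2*η)/4))) =
      h ^ (η/2) * ∑ k ∈ Finset.range (i-1),
        (i:ℝ) ^ ((1:ℝ)/4) * ((k:ℝ)+1) ^ (-(1:ℝ)/4) * ((i:ℝ)-(k:ℝ)) ^ (-((7-2*η)/4)) := by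
    rw [← mul_assoc, ← Real.rpow_add hh]
    congr 1
    ring
  rw [hfact]
  have := sum_bound η hη1 hη2 i hi2
  have hpow : (0:ℝ) < h ^ (η/2) := Real.rpow_pos_of_pos hh _
  nlinarith [this, hpow]
end
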